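/- If two reduced words i, i' ∈ R(u,v) are related by a non-trivial 2- or 3-move in position k, then φ⁺_{i,i'} ∘ φ⁺_{i',i} = τ_{k,i}, the symplectic transvection of ℤ^m associated to the vertex k of Σ(i). -/

import Mathlib

open scoped Classical

namespace SLC

variable {V : Type*} [DecidableEq V]

/-- The simply-laced Coxeter matrix associated with a simple graph `P`:
`M i i = 1`, `M i j = 3` if `i` and `j` are adjacent, and `M i j = 2` otherwise. -/
noncomputable def coxeterMatrix (P : SimpleGraph V) : CoxeterMatrix V where
  M := fun i j => if i = j then 1 else if P.Adj i j then 3 else 2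
  isSymm := by
    ext i j
    show (if j = i then 1 else if P.Adj j i then 3 else 2) = (if i = j then 1 else if P.Adj i j then 3 else 2)
    by_cases h : i = j
    · subst h; rfl
    · rw [if_neg (Ne.symm h), if_neg h]
      by_cases ha : P.Adj i j
      · rw [if_pos (P.adj_symm ha), if_pos ha]
      · rw [if_neg (fun hc => ha (P.adj_symm hc)), if_neg ha]
  diagonal := by intro i; simp
  off_diagonal := by
    intro i i' h
    show (if i = i' then 1 else if P.Adj i i' then 3 else 2) ≠ 1
    rw [if_neg h]
    split <;> omega

/-- `e` is a reduced word for the pair `(u, v)`: the subword of entries with negative sign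
(first component `false`), with signs forgotten, is a reduced word for `u`, and the subword of
entries with positive sign is a reduced word for `v`. -/
def IsRWordPair {W : Type*} [Group W] (P : SimpleGraph V)
    (cs : CoxeterSystem (coxeterMatrix P) W) (u v : W) {m : ℕ}
    (e : Fin m → Bool × V) : Prop :=
  cs.wordProd (((List.ofFn e).filter fun p => !p.1).map Prod.snd) = u ∧
    (((List.ofFn e).filter fun p => !p.1).map Prod.snd).length = cs.length u ∧
    cs.wordProd (((List.ofFn e).filter fun p => p.1).map Prod.snd) = v ∧
    (((List.ofFn e).filter fun p => p.1).map Prod.snd).length = cs.length v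

/-- `k = l⁻`: `k` is the largest index smaller than `l` carrying the same letter of `P`. -/
def IsPred {m : ℕ} (e : Fin m → Bool × V) (k l : Fin m) : Prop :=
  k < l ∧ (e k).2 = (e l).2 ∧ ∀ j, k < j → j < l → (e j).2 ≠ (e l).2

/-- The index `l` is `e`-bounded: `l⁻ > 0`, i.e. `l` has a predecessor. -/
def BoundedIdx {m : ℕ} (e : Fin m → Bool × V) (l : Fin m) : Prop :=
  ∃ k, IsPred e k l

/-- Conditions (ii) and (iii) of Definition 3.1 (inclined edges), for `k < l`. -/
def InclCond {m : ℕ} (P : SimpleGraph V) (e : Fin m → Bool × V) (k l : Fin m) : Prop :=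
  k < l ∧ P.Adj (e k).2 (e l).2 ∧
    ((∃ p, IsPred e p l ∧ p < k ∧ (∀ q, IsPred e q k → q < p) ∧ (e p).1 = (e k).1) ∨
     (∃ q, IsPred e q k ∧ (∀ p, IsPred e p l → p < q) ∧ (e q).1 = !(e k).1))

/-- `a → b` is a directed edge of the graph `Σ(e)`. -/
def DirEdge {m : ℕ} (P : SimpleGraph V) (e : Fin m → Bool × V) (a b : Fin m) : Prop :=
  (IsPred e a b ∧ (e a).1 = true) ∨ (IsPred e b a ∧ (e b).1 = false) ∨
    (InclCond P e a b ∧ (e a).1 = false) ∨ (InclCond P e b a ∧ (e b).1 = true)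

/-- `{a, b}` is an edge of the graph `Σ(e)` (in some direction). -/
def UEdge {m : ℕ} (P : SimpleGraph V) (e : Fin m → Bool × V) (a b : Fin m) : Prop :=
  DirEdge P e a b ∨ DirEdge P e b a

/-- Adjacency in the doubled graph `P̃`. -/
def TAdj (P : SimpleGraph V) (p q : Bool × V) : Prop :=
  p.1 = q.1 ∧ P.Adj p.2 q.2

/-- The negative of a letter of `P̃`. -/
def negEnt (p : Bool × V) : Bool × V := (!p.1, p.2)

/-- The combinatorial data of a 2- or 3-move: the (consecutive) positions involved. -/
inductive MoveSpec (m : ℕ) where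
  | two (a b : Fin m)
  | three (a b c : Fin m)

/-- The position of a move (the last of the positions involved). -/
def MoveSpec.pos {m : ℕ} : MoveSpec m → Fin m
  | .two _ b => b
  | .three _ _ c => c

/-- `e'` is obtained from `e` by the 2- or 3-move described by `s`. -/
def IsMove {m : ℕ} (P : SimpleGraph V) (e e' : Fin m → Bool × V) : MoveSpec m → Prop
  | .two a b => (b : ℕ) = (a : ℕ) + 1 ∧ ¬ TAdj P (e a) (e b) ∧
      e' a = e b ∧ e' b = e a ∧ ∀ l, l ≠ a → l ≠ b → e' l = e l
  | .three a b c => (b : ℕ) = (a : ℕ) + 1 ∧ (c : ℕ) = (b : ℕ) + 1 ∧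
      e c = e a ∧ TAdj P (e b) (e c) ∧
      e' a = e b ∧ e' b = e a ∧ e' c = e b ∧ ∀ l, l ≠ a → l ≠ b → l ≠ c → e' l = e l

/-- A move is trivial if it is a 2-move interchanging entries which are not opposite. -/
def MoveTrivial {m : ℕ} (e : Fin m → Bool × V) : MoveSpec m → Prop
  | .two a b => e b ≠ negEnt (e a)
  | .three _ _ _ => False

/-- The permutation `σ` associated with a move. -/
noncomputable def moveSigma {m : ℕ} (e : Fin m → Bool × V) : MoveSpec m → Equiv.Perm (Fin m)
  | .two a b => if e b = negEnt (e a) then 1 else Equiv.swap a b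
  | .three a b _ => Equiv.swap a b

/-- The skew-symmetric form `Ω` of the graph `Σ(e)`, over a commutative ring `R`. -/
noncomputable def omegaForm (R : Type*) [CommRing R] {m : ℕ} (P : SimpleGraph V)
    (e : Fin m → Bool × V) (x y : Fin m → R) : R :=
  ∑ a : Fin m, ∑ b : Fin m, if DirEdge P e a b then x a * y b - x b * y a else 0

/-- The symplectic transvection `τ_k` of the graph `Σ(e)`, over `R`. -/
noncomputable def transv (R : Type*) [CommRing R] {m : ℕ} (P : SimpleGraph V)
    (e : Fin m → Bool × V) (k : Fin m) (x : Fin m → R) : Fin m → R :=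
  x - omegaForm R P e x (Pi.single k 1) • (Pi.single k 1 : Fin m → R)

/-- The group `Γ_e ⊆ GL_m(ℤ)` generated by the transvections `τ_k`, `k ∈ B(e)`. -/
noncomputable def Gamma {m : ℕ} (P : SimpleGraph V) (e : Fin m → Bool × V) :
    Subgroup ((Fin m → ℤ) ≃ₗ[ℤ] (Fin m → ℤ)) :=
  Subgroup.closure {g | ∃ k, BoundedIdx e k ∧ ⇑g = transv ℤ P e k}

/-- The group `Γ_e(F₂)` of linear transformations of `F₂^m` generated by the reductions
modulo 2 of the transvections `τ_k`, `k ∈ B(e)`. -/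
noncomputable def GammaF2 {m : ℕ} (P : SimpleGraph V) (e : Fin m → Bool × V) :
    Subgroup (Equiv.Perm (Fin m → ZMod 2)) :=
  Subgroup.closure {g | ∃ k, BoundedIdx e k ∧ ⇑g = transv (ZMod 2) P e k}

/-- The map `φ⁺` associated with a move. -/
noncomputable def phiP {m : ℕ} (P : SimpleGraph V) (e : Fin m → Bool × V) (s : MoveSpec m)
    (x : Fin m → ℤ) : Fin m → ℤ := fun l =>
  if l = s.pos ∧ ¬ MoveTrivial e s then
    (∑ a : Fin m, if DirEdge P e a s.pos then x a else 0) - x s.pos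
  else x (moveSigma e s l)

/-- The map `φ⁻` associated with a move. -/
noncomputable def phiM {m : ℕ} (P : SimpleGraph V) (e : Fin m → Bool × V) (s : MoveSpec m)
    (x : Fin m → ℤ) : Fin m → ℤ := fun l =>
  if l = s.pos ∧ ¬ MoveTrivial e s then
    (∑ b : Fin m, if DirEdge P e s.pos b then x b else 0) - x s.pos
  else x (moveSigma e s l)

end SLC

/-!
Away from the position `k` of the move, `φ⁺` only permutes coordinates by the involution `σ`,
so `φ⁺_{i,i'} ∘ φ⁺_{i',i}` is the identity there. In coordinate `k` the composite is
`∑_{a → k in Σ(i')} x_{σ a} - ∑_{a → k in Σ(i)} x_a + x_k`, which is `τ_k(x)_k = x_k - Ω(x, e_k)`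
as soon as `σ` maps the in-neighbours of `k` in `Σ(i')` onto the out-neighbours of `k` in `Σ(i)`.
That is a local fact about the two graphs: near `k` a non-trivial move sees the configuration
`(i, -i)` or `(i, j, i)`, and one reads off from Definition 3.1 that the move reverses every edge
at `k`, exchanging horizontal and inclined edges where needed.
-/

-- reopened so that `[DecidableEq V]` is not a section variable of the lemmas below
namespace SLC

variable {V : Type*}

section Words

variable {m : ℕ} {P : SimpleGraph V} {f g : Fin m → Bool × V}

theorem IsPred.unique {k k' l : Fin m} (h : IsPred f k l) (h' : IsPred f k' l) : k = k' := by
  rcases lt_trichotomy k k' with hlt | heq | hlt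
  · exact absurd h'.2.1 (h.2.2 k' hlt h'.1)
  · exact heq
  · exact absurd h.2.1 (h'.2.2 k hlt h.1)

theorem IsPred.iff_eq {a c l : Fin m} (h : IsPred f a c) : IsPred f l c ↔ l = a :=
  ⟨fun hl => hl.unique h, fun hl => hl ▸ h⟩

theorem isPred_of_val_eq_succ {a b : Fin m} (hb : (b : ℕ) = a + 1) (hv : (f a).2 = (f b).2) :
    IsPred f a b :=
  ⟨by rw [Fin.lt_def]; omega, hv, fun j h1 h2 => by rw [Fin.lt_def] at h1 h2; omega⟩

theorem isPred_congr (h : ∀ j, (f j).2 = (g j).2) {k l : Fin m} :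
    IsPred f k l ↔ IsPred g k l := by
  simp only [IsPred, h]

/-- `x` and `y` are the last occurrences up to `c` of the same letter in words `f` and `g` that
agree after `c`. -/
theorem IsPred.of_agree {x y c l : Fin m} (h : IsPred f x l) (hx : x ≤ c) (hy : y ≤ c)
    (hxy : (f x).2 = (g y).2) (hg : ∀ j, y < j → j ≤ c → (g j).2 ≠ (g y).2)
    (hfg : ∀ j, c < j → f j = g j) (hcl : c < l) : IsPred g y l := by
  obtain ⟨-, hxl, hbetween⟩ := h
  have hyl : (g y).2 = (g l).2 := by rw [← hxy, hxl, hfg l hcl]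
  refine ⟨lt_of_le_of_lt hy hcl, hyl, fun j hyj hjl => ?_⟩
  rcases le_or_gt j c with hjc | hcj
  · rw [← hyl]
    exact hg j hyj hjc
  · rw [← hfg j hcj, ← hfg l hcl]
    exact hbetween j (lt_of_le_of_lt hx hcj) hjl

theorem isPred_iff_of_agree {x y c l : Fin m} (hx : x ≤ c) (hy : y ≤ c)
    (hxy : (f x).2 = (g y).2) (hf : ∀ j, x < j → j ≤ c → (f j).2 ≠ (f x).2)
    (hg : ∀ j, y < j → j ≤ c → (g j).2 ≠ (g y).2)
    (hfg : ∀ j, c < j → f j = g j) (hcl : c < l) : IsPred f x l ↔ IsPred g y l :=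
  ⟨fun h => h.of_agree hx hy hxy hg hfg hcl,
    fun h => h.of_agree hy hx hxy.symm hf (fun j hj => (hfg j hj).symm) hcl⟩

theorem dirEdge_irrefl (a : Fin m) : ¬ DirEdge P f a a := by
  rintro (⟨h, -⟩ | ⟨h, -⟩ | ⟨h, -⟩ | ⟨h, -⟩) <;> exact lt_irrefl a h.1

theorem dirEdge_iff_of_lt {k l : Fin m} (hkl : k < l) :
    DirEdge P f k l ↔
      (IsPred f k l ∧ (f k).1 = true) ∨ (InclCond P f k l ∧ (f k).1 = false) := by
  have hlk : ¬ l < k := lt_asymm hkl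
  constructor
  · rintro (h | ⟨h, -⟩ | h | ⟨h, -⟩)
    exacts [Or.inl h, absurd h.1 hlk, Or.inr h, absurd h.1 hlk]
  · rintro (h | h)
    exacts [Or.inl h, Or.inr (Or.inr (Or.inl h))]

theorem dirEdge_iff_of_gt {k l : Fin m} (hkl : k < l) :
    DirEdge P f l k ↔
      (IsPred f k l ∧ (f k).1 = false) ∨ (InclCond P f k l ∧ (f k).1 = true) := by
  have hlk : ¬ l < k := lt_asymm hkl
  constructor
  · rintro (⟨h, -⟩ | h | ⟨h, -⟩ | h)
    exacts [absurd h.1 hlk, Or.inl h, absurd h.1 hlk, Or.inr h]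
  · rintro (h | h)
    exacts [Or.inr (Or.inl h), Or.inr (Or.inr (Or.inr h))]

end Words

section Moves

variable {m : ℕ} {P : SimpleGraph V} {f e e' : Fin m → Bool × V} {a b c l : Fin m}

/-- The configuration `(i, -i)` in consecutive positions on which a non-trivial 2-move acts. -/
def IsOppositePair (f : Fin m → Bool × V) (a b : Fin m) : Prop :=
  (b : ℕ) = a + 1 ∧ f b = negEnt (f a)

theorem IsOppositePair.isPred (h : IsOppositePair f a b) : IsPred f a b :=
  isPred_of_val_eq_succ h.1 (by rw [h.2]; rfl)

theorem IsOppositePair.sign_eq (h : IsOppositePair f a b) : (f b).1 = !(f a).1 := by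
  rw [h.2]; rfl

theorem IsOppositePair.not_inclCond (h : IsOppositePair f a b) (l : Fin m) :
    ¬ InclCond P f l b := by
  have hb := h.1
  rintro ⟨hlb, -, ⟨p, hp, hpl, -⟩ | ⟨q, hq, hall, -⟩⟩
  · rw [hp.unique h.isPred] at hpl
    rw [Fin.lt_def] at hpl hlb; omega
  · have haq := hall a h.isPred
    have hql := hq.1
    rw [Fin.lt_def] at haq hql hlb; omega

theorem IsOppositePair.inclCond_iff (h : IsOppositePair f a b) (hbl : b < l) :
    InclCond P f b l ↔ P.Adj (f b).2 (f l).2 ∧ ∀ p, IsPred f p l → p < a := by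
  have hb := h.1
  constructor
  · rintro ⟨-, hadj, ⟨p, -, hpb, hall, -⟩ | ⟨q, hq, hall, -⟩⟩
    · have hap := hall a h.isPred
      rw [Fin.lt_def] at hap hpb; omega
    · exact ⟨hadj, hq.unique h.isPred ▸ hall⟩
  · rintro ⟨hadj, hall⟩
    exact ⟨hbl, hadj, Or.inr ⟨a, h.isPred, hall, by rw [h.sign_eq, Bool.not_not]⟩⟩

theorem IsMove.isOppositePair_two (hmv : IsMove P e e' (.two a b))
    (hnt : ¬ MoveTrivial e (.two a b)) : IsOppositePair e a b ∧ IsOppositePair e' a b := by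
  obtain ⟨hb, -, h'a, h'b, -⟩ := hmv
  have hop : e b = negEnt (e a) := not_not.mp hnt
  refine ⟨⟨hb, hop⟩, hb, ?_⟩
  rw [h'a, h'b, hop]
  simp [negEnt]

theorem IsMove.dirEdge_two_iff (hmv : IsMove P e e' (.two a b))
    (hnt : ¬ MoveTrivial e (.two a b)) (l : Fin m) :
    DirEdge P e' l b ↔ DirEdge P e b l := by
  obtain ⟨hop, hop'⟩ := hmv.isOppositePair_two hnt
  obtain ⟨-, -, h'a, h'b, h'rest⟩ := hmv
  have hsnd : ∀ j, (e' j).2 = (e j).2 := by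
    intro j
    by_cases hja : j = a
    · rw [hja, h'a, hop.2]; rfl
    by_cases hjb : j = b
    · rw [hjb, h'b, hop.2]; rfl
    rw [h'rest j hja hjb]
  rcases lt_trichotomy l b with hl | rfl | hl
  · rw [dirEdge_iff_of_lt hl, dirEdge_iff_of_gt hl, hop'.isPred.iff_eq, hop.isPred.iff_eq]
    simp only [hop.not_inclCond, hop'.not_inclCond, false_and, or_false]
    refine and_congr_right fun hla => ?_
    rw [hla, h'a, hop.sign_eq, Bool.not_eq_true']
  · exact iff_of_false (dirEdge_irrefl _) (dirEdge_irrefl _)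
  · rw [dirEdge_iff_of_gt hl, dirEdge_iff_of_lt hl, hop'.inclCond_iff hl, hop.inclCond_iff hl,
      hsnd b, hsnd l, h'b, hop.sign_eq]
    simp only [isPred_congr hsnd]
    cases (e a).1 <;> simp

/-- The configuration `(i, j, i)` in consecutive positions, with `i`, `j` adjacent letters of the
same sign, on which a 3-move acts. -/
def IsBraidTriple (P : SimpleGraph V) (f : Fin m → Bool × V) (a b c : Fin m) : Prop :=
  (b : ℕ) = a + 1 ∧ (c : ℕ) = b + 1 ∧ f c = f a ∧ TAdj P (f b) (f c)

theorem IsBraidTriple.isPred (h : IsBraidTriple P f a b c) : IsPred f a c := by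
  obtain ⟨hb, hc, hca, hT⟩ := h
  refine ⟨by rw [Fin.lt_def]; omega, by rw [hca], fun j h1 h2 hj => ?_⟩
  have hjb : j = b := by rw [Fin.lt_def] at h1 h2; exact Fin.ext (by omega)
  rw [hjb, hca] at hj
  exact hT.2.ne (hj.trans (congrArg Prod.snd hca).symm)

theorem IsBraidTriple.sign_eq (h : IsBraidTriple P f a b c) : (f b).1 = (f a).1 := by
  rw [h.2.2.2.1, h.2.2.1]

theorem IsBraidTriple.inclCond_iff_of_lt (h : IsBraidTriple P f a b c) (hlc : l < c) :
    InclCond P f l c ↔ l = b := by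
  obtain ⟨hb, hc, hca, hT⟩ := id h
  constructor
  · rintro ⟨-, -, ⟨p, hp, hpl, -⟩ | ⟨q, hq, hall, -⟩⟩
    · rw [hp.unique h.isPred, Fin.lt_def] at hpl
      rw [Fin.lt_def] at hlc
      exact Fin.ext (by omega)
    · have haq := hall a h.isPred
      have hql := hq.1
      rw [Fin.lt_def] at haq hql hlc; omega
  · rintro rfl
    refine ⟨hlc, hT.2, Or.inl ⟨a, h.isPred, by rw [Fin.lt_def]; omega, fun q hq => ?_, ?_⟩⟩
    · have hqa : q ≠ a := by
        rintro rfl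
        exact hT.2.ne (hq.2.1.symm.trans (congrArg Prod.snd hca).symm)
      have hqb := hq.1
      rw [Fin.lt_def] at hqb ⊢
      have := Fin.val_ne_of_ne hqa
      omega
    · exact h.sign_eq.symm

theorem IsBraidTriple.inclCond_iff_of_gt (h : IsBraidTriple P f a b c) (hcl : c < l) :
    InclCond P f c l ↔ IsPred f b l := by
  obtain ⟨hb, hc, hca, hT⟩ := id h
  constructor
  · rintro ⟨-, -, ⟨p, hp, hpc, hall, -⟩ | ⟨q, hq, -, hsign⟩⟩
    · have hap := hall a h.isPred
      rw [Fin.lt_def] at hap hpc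
      rwa [show p = b from Fin.ext (by omega)] at hp
    · rw [hq.unique h.isPred, hca] at hsign
      cases h : (f a).1 <;> simp [h] at hsign
  · intro hbl
    refine ⟨hcl, hbl.2.1 ▸ hT.2.symm,
      Or.inl ⟨b, hbl, by rw [Fin.lt_def]; omega, fun q hq => ?_, hT.1⟩⟩
    rw [hq.unique h.isPred, Fin.lt_def]; omega

theorem IsBraidTriple.dirEdge_to_iff (h : IsBraidTriple P f a b c) (hlc : l < c) :
    DirEdge P f l c ↔ (l = a ∧ (f a).1 = true) ∨ (l = b ∧ (f a).1 = false) := by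
  rw [dirEdge_iff_of_lt hlc, h.isPred.iff_eq, h.inclCond_iff_of_lt hlc]
  constructor
  · rintro (⟨rfl, hs⟩ | ⟨rfl, hs⟩)
    exacts [Or.inl ⟨rfl, hs⟩, Or.inr ⟨rfl, h.sign_eq ▸ hs⟩]
  · rintro (⟨rfl, hs⟩ | ⟨rfl, hs⟩)
    exacts [Or.inl ⟨rfl, hs⟩, Or.inr ⟨rfl, h.sign_eq ▸ hs⟩]

theorem IsBraidTriple.dirEdge_from_iff (h : IsBraidTriple P f a b c) (hlc : l < c) :
    DirEdge P f c l ↔ (l = a ∧ (f a).1 = false) ∨ (l = b ∧ (f a).1 = true) := by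
  rw [dirEdge_iff_of_gt hlc, h.isPred.iff_eq, h.inclCond_iff_of_lt hlc]
  constructor
  · rintro (⟨rfl, hs⟩ | ⟨rfl, hs⟩)
    exacts [Or.inl ⟨rfl, hs⟩, Or.inr ⟨rfl, h.sign_eq ▸ hs⟩]
  · rintro (⟨rfl, hs⟩ | ⟨rfl, hs⟩)
    exacts [Or.inl ⟨rfl, hs⟩, Or.inr ⟨rfl, h.sign_eq ▸ hs⟩]

theorem IsMove.isBraidTriple_three (hmv : IsMove P e e' (.three a b c)) :
    IsBraidTriple P e a b c ∧ IsBraidTriple P e' a b c := by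
  obtain ⟨hb, hc, hca, hT, h'a, h'b, h'c, -⟩ := hmv
  refine ⟨⟨hb, hc, hca, hT⟩, hb, hc, by rw [h'a, h'c], ?_⟩
  rw [h'b, h'c, ← hca]
  exact ⟨hT.1.symm, hT.2.symm⟩

theorem IsMove.dirEdge_three_iff (hmv : IsMove P e e' (.three a b c)) (l : Fin m) :
    DirEdge P e' l c ↔ DirEdge P e c (Equiv.swap a b l) := by
  obtain ⟨hbr, hbr'⟩ := hmv.isBraidTriple_three
  obtain ⟨hb, hc, hca, hT, h'a, h'b, h'c, h'rest⟩ := hmv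
  have hac : a < c := by rw [Fin.lt_def]; omega
  have hbc : b < c := by rw [Fin.lt_def]; omega
  rcases lt_trichotomy l c with hl | rfl | hl
  · have hσl : Equiv.swap a b l < c := by
      rw [Equiv.swap_apply_def]
      split_ifs <;> assumption
    rw [hbr'.dirEdge_to_iff hl, hbr.dirEdge_from_iff hσl, Equiv.swap_apply_eq_iff,
      Equiv.swap_apply_eq_iff, Equiv.swap_apply_left, Equiv.swap_apply_right, h'a, hbr.sign_eq]
    tauto
  · rw [Equiv.swap_apply_of_ne_of_ne hac.ne' hbc.ne']
    exact iff_of_false (dirEdge_irrefl _) (dirEdge_irrefl _)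
  · have hgt : ∀ j, c < j → e' j = e j := fun j hj =>
      h'rest j (hac.trans hj).ne' (hbc.trans hj).ne' hj.ne'
    have hbetween : ∀ j, b < j → j ≤ c → j = c := fun j h1 h2 => by
      rw [Fin.lt_def] at h1; rw [Fin.le_def] at h2; exact Fin.ext (by omega)
    have hne : (e b).2 ≠ (e a).2 := hca ▸ hT.2.ne
    have hcb : IsPred e' c l ↔ IsPred e b l :=
      isPred_iff_of_agree le_rfl hbc.le (by rw [h'c]) (fun j h1 h2 => absurd h2 h1.not_ge)
        (fun j h1 h2 => by rw [hbetween j h1 h2, hca]; exact hne.symm) hgt hl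
    have hbc' : IsPred e' b l ↔ IsPred e c l :=
      isPred_iff_of_agree hbc.le le_rfl (by rw [h'b, hca])
        (fun j h1 h2 => by rw [hbetween j h1 h2, h'c, h'b]; exact hne)
        (fun j h1 h2 => absurd h2 h1.not_ge) hgt hl
    rw [Equiv.swap_apply_of_ne_of_ne (hac.trans hl).ne' (hbc.trans hl).ne', dirEdge_iff_of_gt hl,
      dirEdge_iff_of_lt hl, hbr'.inclCond_iff_of_gt hl, hbr.inclCond_iff_of_gt hl, hcb, hbc', h'c,
      hca, hbr.sign_eq]
    tauto

end Moves

theorem omegaForm_single_right {R : Type*} [CommRing R] {m : ℕ} (P : SimpleGraph V)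
    (f : Fin m → Bool × V) (x : Fin m → R) (k : Fin m) :
    omegaForm R P f x (Pi.single k 1) =
      (∑ a, if DirEdge P f a k then x a else 0) - ∑ b, if DirEdge P f k b then x b else 0 := by
  have hsplit : ∀ a b, (if DirEdge P f a b then
      x a * (Pi.single k 1 : Fin m → R) b - x b * (Pi.single k 1 : Fin m → R) a else 0) =
        (if b = k ∧ DirEdge P f a k then x a else 0) -
        (if a = k ∧ DirEdge P f k b then x b else 0) := by
    intro a b
    simp only [Pi.single_apply]
    split_ifs <;> simp_all
  simp only [omegaForm, hsplit, Finset.sum_sub_distrib, ite_and]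
  rw [Finset.sum_comm (f := fun a b => if a = k then _ else _)]
  simp

section Phi

variable [DecidableEq V] {m : ℕ} {P : SimpleGraph V} {w w' : Fin m → Bool × V} {s : MoveSpec m}

theorem phiP_apply_pos (hnt : ¬ MoveTrivial w s) (x : Fin m → ℤ) :
    phiP P w s x s.pos = (∑ a, if DirEdge P w a s.pos then x a else 0) - x s.pos := by
  simp [phiP, hnt]

theorem phiP_apply_of_ne (x : Fin m → ℤ) {l : Fin m} (hl : l ≠ s.pos) :
    phiP P w s x l = x (moveSigma w s l) := by
  simp [phiP, hl]

theorem phiP_comp_phiP_eq_transv (hnt : ¬ MoveTrivial w s) (hnt' : ¬ MoveTrivial w' s)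
    (hσ : moveSigma w' s = moveSigma w s) (hfix : moveSigma w s s.pos = s.pos)
    (hinv : Function.Involutive (moveSigma w s))
    (hin : ∀ l, DirEdge P w' l s.pos ↔ DirEdge P w s.pos (moveSigma w s l)) :
    phiP P w' s ∘ phiP P w s = transv ℤ P w s.pos := by
  funext x l
  rw [Function.comp_apply]
  by_cases hl : l = s.pos
  · subst hl
    have hsum : (∑ a, if DirEdge P w' a s.pos then phiP P w s x a else 0)
        = ∑ b, if DirEdge P w s.pos b then x b else 0 := by
      rw [← Equiv.sum_comp (moveSigma w s) fun b => if DirEdge P w s.pos b then x b else 0]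
      refine Finset.sum_congr rfl fun a _ => ?_
      by_cases hD : DirEdge P w' a s.pos
      · have has : a ≠ s.pos := fun h => dirEdge_irrefl s.pos (h ▸ hD)
        rw [if_pos hD, if_pos ((hin a).1 hD), phiP_apply_of_ne x has]
      · rw [if_neg hD, if_neg (fun h => hD ((hin a).2 h))]
    rw [phiP_apply_pos hnt', hsum, phiP_apply_pos hnt]
    simp only [transv, Pi.sub_apply, Pi.smul_apply, smul_eq_mul, Pi.single_eq_same, mul_one,
      omegaForm_single_right]
    ring
  · have hσl : moveSigma w s l ≠ s.pos := fun h => hl (by rw [← hinv l, h, hfix])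
    rw [phiP_apply_of_ne _ hl, hσ, phiP_apply_of_ne x hσl, hinv]
    simp [transv, Pi.single_eq_of_ne hl]

end Phi

variable {V : Type*} [DecidableEq V] [Fintype V] {W : Type*} [Group W]

theorem phi_squared_general (P : SimpleGraph V) {m : ℕ} (e e' : Fin m → Bool × V) (s : MoveSpec m)
    (hmv : IsMove P e e' s) (hnt : ¬ MoveTrivial e s) :
    phiP P e' s ∘ phiP P e s = transv ℤ P e s.pos := by
  cases s with
  | two a b =>
    obtain ⟨hop, hop'⟩ := hmv.isOppositePair_two hnt
    have hσ : ∀ f : Fin m → Bool × V, IsOppositePair f a b → moveSigma f (.two a b) = 1 :=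
      fun f hf => if_pos hf.2
    refine phiP_comp_phiP_eq_transv hnt (not_not_intro hop'.2) (by rw [hσ e hop, hσ e' hop'])
      (by rw [hσ e hop]; rfl) (by rw [hσ e hop]; exact fun _ => rfl) fun l => ?_
    rw [hσ e hop]
    exact hmv.dirEdge_two_iff hnt l
  | three a b c =>
    obtain ⟨hb, hc, -⟩ := id hmv
    have hσc : Equiv.swap a b c = c :=
      Equiv.swap_apply_of_ne_of_ne (Fin.ne_of_val_ne (by omega)) (Fin.ne_of_val_ne (by omega))
    exact phiP_comp_phiP_eq_transv hnt id rfl hσc (Equiv.swap_apply_self a b)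
      hmv.dirEdge_three_iff

/-- Theorem 3.8 (b): for a non-trivial move in position `k`,
`φ⁺_{i,i'} ∘ φ⁺_{i',i} = τ_{k,i}`. -/
theorem phi_squared (P : SimpleGraph V) (cs : CoxeterSystem (coxeterMatrix P) W)
    (u v : W) {m : ℕ} (hm : m = cs.length u + cs.length v)
    (e e' : Fin m → Bool × V) (he : IsRWordPair P cs u v e) (he' : IsRWordPair P cs u v e')
    (s : MoveSpec m) (hmv : IsMove P e e' s) (hnt : ¬ MoveTrivial e s) :
    phiP P e' s ∘ phiP P e s = transv ℤ P e s.pos :=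
  phi_squared_general P e e' s hmv hnt

end SLC
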